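/- Let ≺ be a monomial order on k[x_0,...,x_n] and let I be a homogeneous ideal with a finite Gröbner basis G. Then there exists a weight vector ω ∈ Z_{≥0}^{n+1} such that for every g ∈ G, the ω-initial form of g equals its ≺-initial term; and for any such ω, the corresponding one-parameter diagonal substitution λ(t).x_i = t^{-ω_i} x_i satisfies: the flat limit as t → 0 of λ(t).I equals the initial ideal in_≺(I). -/

import Mathlib

open MvPolynomial

variable {k : Type*} [Field k] {n : ℕ}

/-- `α` is the exponent of the `≺`-leading term of `f`. -/
def IsLeadingExp (mo : MonomialOrder (Fin (n + 1))) (f : MvPolynomial (Fin (n + 1)) k)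
    (α : Fin (n + 1) →₀ ℕ) : Prop :=
  coeff α f ≠ 0 ∧ ∀ β : Fin (n + 1) →₀ ℕ, coeff β f ≠ 0 → mo.toSyn β ≤ mo.toSyn α

/-- The `ω`-weight of an exponent vector. -/
def wt (ω : Fin (n + 1) → ℕ) (α : Fin (n + 1) →₀ ℕ) : ℕ := ∑ i, ω i * α i

/-- The `ω`-initial form of `f`: the sum of the terms of `f` of maximal `ω`-weight. -/
noncomputable def inForm (ω : Fin (n + 1) → ℕ) (f : MvPolynomial (Fin (n + 1)) k) :
    MvPolynomial (Fin (n + 1)) k :=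
  ∑ α ∈ f.support.filter (fun α => wt ω α = f.support.sup (wt ω)),
    monomial α (coeff α f)

/-- The initial ideal `in_≺(I)`: the ideal generated by the `≺`-leading terms of the
elements of `I`. -/
noncomputable def initialIdeal (mo : MonomialOrder (Fin (n + 1))) (I : Ideal (MvPolynomial (Fin (n + 1)) k)) :
    Ideal (MvPolynomial (Fin (n + 1)) k) :=
  Ideal.span {p | ∃ f ∈ I, ∃ α, IsLeadingExp mo f α ∧ p = monomial α (coeff α f)}

/-- The `ω`-initial ideal `in_ω(I)`: the ideal generated by the `ω`-initial forms of the
elements of `I`. -/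
noncomputable def inFormIdeal (ω : Fin (n + 1) → ℕ) (I : Ideal (MvPolynomial (Fin (n + 1)) k)) :
    Ideal (MvPolynomial (Fin (n + 1)) k) :=
  Ideal.span {p | ∃ f ∈ I, p = inForm ω f}

noncomputable instance : GradedAlgebra (homogeneousSubmodule (Fin (n + 1)) k) :=
  MvPolynomial.gradedAlgebra

/-!
For `g ∈ G` with leading exponent `α` and another exponent `β`, the conditions `ω ⬝ β < ω ⬝ α`
are finitely many strict linear inequalities. By Gordan's theorem, proved by Fourier–Motzkin
elimination, they have a rational solution `ω > 0` unless a nonzero nonnegative combination of the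
vectors `α - β` and of the unit vectors vanishes. After clearing denominators such a relation reads
`∑ cⱼ αⱼ ≤ ∑ cⱼ βⱼ` coordinatewise, while `∑ cⱼ βⱼ ≺ ∑ cⱼ αⱼ` since `≺` is a monomial order.
Clearing the denominators of the solution gives `ω ∈ ℕⁿ⁺¹`.

For such `ω`, `in_≺(I)` is generated by the `in_≺(g) = in_ω(g)`, so it lies in `in_ω(I)`.
Conversely, for `f ∈ I` some `in_≺(g)` divides `in_≺(f)`, and `f' = f - c x^γ g` has a smaller
leading monomial. Every term of `c x^γ g` other than `in_≺(f)` has smaller `ω`-weight than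
`in_≺(f)`, so `in_ω(f)` is the sum of `0` or `in_ω(f')` and of `0` or `in_≺(f)`; induction on the
leading monomial puts `in_ω(f)` into `in_≺(I)`.
-/

open Matrix

section Gordan

variable {𝕜 : Type*} [Field 𝕜] [LinearOrder 𝕜] {N : ℕ} {ι : Type*}

variable (𝕜) in
def NoNonnegRelation {ι E : Type*} [Fintype ι] [AddCommGroup E] [Module 𝕜 E] (v : ι → E) :
    Prop :=
  ∀ c : ι → 𝕜, 0 ≤ c → ∑ j, c j • v j = 0 → c = 0

abbrev FourierMotzkinIndex (v : ι → Fin (N + 1) → 𝕜) : Type _ :=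
  {j // v j 0 = 0} ⊕ {j // 0 < v j 0} × {j // v j 0 < 0}

def fourierMotzkin (v : ι → Fin (N + 1) → 𝕜) : FourierMotzkinIndex v → Fin (N + 1) → 𝕜
  | .inl j => v j
  | .inr (p, q) => v p 0 • v q - v q 0 • v p

theorem fourierMotzkin_apply_zero (v : ι → Fin (N + 1) → 𝕜) (k : FourierMotzkinIndex v) :
    fourierMotzkin v k 0 = 0 := by
  rcases k with j | ⟨p, q⟩
  · exact j.2
  · simp [fourierMotzkin, mul_comm]

theorem NoNonnegRelation.vecTail [Fintype ι] {v : ι → Fin (N + 1) → 𝕜}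
    (hv : NoNonnegRelation 𝕜 v) (hv0 : ∀ j, v j 0 = 0) :
    NoNonnegRelation 𝕜 fun j => vecTail (v j) := by
  intro c hc hrel
  refine hv c hc (funext fun i => Fin.cases ?_ (fun i => ?_) i)
  · simp [hv0]
  · simpa [Matrix.vecTail] using congrFun hrel i

variable [IsStrictOrderedRing 𝕜]

theorem NoNonnegRelation.of_nonneg_combination {ι κ E : Type*} [Fintype ι] [Fintype κ]
    [AddCommGroup E] [Module 𝕜 E] {v : ι → E} (hv : NoNonnegRelation 𝕜 v) {w : κ → E}
    (A : κ → ι → 𝕜) (hA : 0 ≤ A) (hA_pos : ∀ k, ∃ j, 0 < A k j)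
    (hw : ∀ k, w k = ∑ j, A k j • v j) : NoNonnegRelation 𝕜 w := by
  intro c hc hrel
  have hterm_nonneg : ∀ j k, 0 ≤ c k * A k j := fun j k => mul_nonneg (hc k) (hA k j)
  have hpull : ∑ j, (∑ k, c k * A k j) • v j = 0 := by
    simp_rw [Finset.sum_smul, mul_smul]
    rw [Finset.sum_comm]
    simpa only [← Finset.smul_sum, ← hw] using hrel
  have hpull0 := hv _ (fun j => Finset.sum_nonneg fun k _ => hterm_nonneg j k) hpull
  funext k
  obtain ⟨j, hj⟩ := hA_pos k
  have hck : c k * A k j = 0 :=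
    (Finset.sum_eq_zero_iff_of_nonneg fun k _ => hterm_nonneg j k).1 (congrFun hpull0 j) k
      (Finset.mem_univ k)
  exact (mul_eq_zero.1 hck).resolve_right hj.ne'

theorem NoNonnegRelation.fourierMotzkin [Fintype ι] {v : ι → Fin (N + 1) → 𝕜}
    (hv : NoNonnegRelation 𝕜 v) : NoNonnegRelation 𝕜 (fourierMotzkin v) := by
  classical
  refine hv.of_nonneg_combination (fun
      | .inl j => Pi.single j.1 1
      | .inr (p, q) => Pi.single q.1 (v p 0) + Pi.single p.1 (-v q 0)) ?_ ?_ ?_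
  · rintro (j | ⟨p, q⟩)
    · exact Pi.single_nonneg.2 zero_le_one
    · exact add_nonneg (Pi.single_nonneg.2 p.2.le) (Pi.single_nonneg.2 (neg_nonneg.2 q.2.le))
  · rintro (j | ⟨p, q⟩)
    · exact ⟨j, by simp⟩
    · have hpq : q.1 ≠ p.1 := fun h => (p.2.trans (h ▸ q.2)).false
      exact ⟨q, by simpa [hpq] using p.2⟩
  · rintro (j | ⟨p, q⟩) <;>
      simp [_root_.fourierMotzkin, add_smul, Finset.sum_add_distrib, Pi.single_apply, ite_smul,
        sub_eq_add_neg]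

theorem exists_forall_dotProduct_pos_of_fin :
    ∀ {N : ℕ} {ι : Type*} [Fintype ι] (v : ι → Fin N → 𝕜), NoNonnegRelation 𝕜 v →
      ∃ ω : Fin N → 𝕜, ∀ j, 0 < ω ⬝ᵥ v j
  | 0, _, _, v, hv => ⟨0, fun j => absurd (congrFun (hv 1 zero_le_one (Subsingleton.elim _ _)) j)
      one_ne_zero⟩
  | N + 1, _, _, v, hv => by
    obtain ⟨ω', hω'⟩ := exists_forall_dotProduct_pos_of_fin _
      (hv.fourierMotzkin.vecTail (fourierMotzkin_apply_zero v))
    set s := fun j => ω' ⬝ᵥ vecTail (v j)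
    have hs_zero (j : {j // v j 0 = 0}) : 0 < s j := hω' (.inl j)
    have hs_pair (p : {j // 0 < v j 0}) (q : {j // v j 0 < 0}) :
        -s p / v p 0 < -s q / v q 0 := by
      have h := hω' (.inr (p, q))
      have tail_smul (a : 𝕜) (x : Fin (N + 1) → 𝕜) : vecTail (a • x) = a • vecTail x := rfl
      simp only [_root_.fourierMotzkin, tail_sub, tail_smul, dotProduct_sub, dotProduct_smul,
        smul_eq_mul] at h
      rw [show -s q / v q 0 = s q / -v q 0 by rw [div_neg, neg_div],
        div_lt_div_iff₀ p.2 (neg_pos.2 q.2)]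
      linarith
    obtain ⟨t, ht_gt, ht_lt⟩ := Set.Finite.exists_between' (Set.finite_range _)
      (Set.finite_range _) (by rintro _ ⟨p, rfl⟩ _ ⟨q, rfl⟩; exact hs_pair p q)
    refine ⟨vecCons t ω', fun j => ?_⟩
    rw [cons_dotProduct]
    rcases lt_trichotomy (v j 0) 0 with hneg | hzero | hpos
    · have := (lt_div_iff_of_neg hneg).1 (ht_lt _ ⟨⟨j, hneg⟩, rfl⟩)
      simp only [vecHead]
      linarith
    · simpa [vecHead, hzero] using hs_zero ⟨j, hzero⟩
    · have := (div_lt_iff₀ hpos).1 (ht_gt _ ⟨⟨j, hpos⟩, rfl⟩)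
      simp only [vecHead]
      linarith

/-- Gordan's theorem. -/
theorem exists_forall_dotProduct_pos {σ ι : Type*} [Fintype σ] [Fintype ι] (v : ι → σ → 𝕜)
    (hv : NoNonnegRelation 𝕜 v) : ∃ ω : σ → 𝕜, ∀ j, 0 < ω ⬝ᵥ v j := by
  let e := Fintype.equivFin σ
  obtain ⟨ω, hω⟩ := exists_forall_dotProduct_pos_of_fin (fun j => v j ∘ e.symm) fun c hc hrel =>
    hv c hc (funext fun i => by simpa using congrFun hrel (e i))
  exact ⟨ω ∘ e, fun j => by simpa [dotProduct_comp_equiv_symm] using hω j⟩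

end Gordan

open Finsupp

theorem Rat.exists_pos_nat_mul_eq_natCast {ι : Type*} [Fintype ι] (d : ι → ℚ) (hd : 0 ≤ d) :
    ∃ D : ℕ, 0 < D ∧ ∃ c : ι → ℕ, ∀ j, (c j : ℚ) = D * d j := by
  refine ⟨∏ j, (d j).den, Finset.prod_pos fun j _ => (d j).pos, ?_⟩
  choose e he using fun j => Finset.dvd_prod_of_mem (fun j => (d j).den) (Finset.mem_univ j)
  refine ⟨fun j => e j * (d j).num.toNat, fun j => ?_⟩
  have hnum : ((d j).num.toNat : ℚ) = (d j).num := by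
    exact_mod_cast Int.toNat_of_nonneg (Rat.num_nonneg.2 (hd j))
  push_cast [he j, hnum, ← Rat.mul_den_eq_num]
  ring

namespace MonomialOrder

variable {σ : Type*} (m : MonomialOrder σ)

theorem toSyn_sum_nsmul_lt {κ : Type*} [Fintype κ] {a b : κ → σ →₀ ℕ}
    (hab : ∀ k, m.toSyn (b k) < m.toSyn (a k)) {c : κ → ℕ} (hc : c ≠ 0) :
    m.toSyn (∑ k, c k • b k) < m.toSyn (∑ k, c k • a k) := by
  obtain ⟨k, hk⟩ := Function.ne_iff.1 hc
  simp only [map_sum, map_nsmul]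
  exact Finset.sum_lt_sum (fun k _ => nsmul_le_nsmul_right (hab k).le _)
    ⟨k, Finset.mem_univ _, nsmul_lt_nsmul_right hk (hab k)⟩

theorem noNonnegRelation_of_toSyn_lt [Fintype σ] [DecidableEq σ] {κ : Type*} [Fintype κ]
    {a b : κ → σ →₀ ℕ} (hab : ∀ k, m.toSyn (b k) < m.toSyn (a k)) :
    NoNonnegRelation ℚ (Sum.elim (fun k i => (a k i : ℚ) - b k i) fun i => Pi.single i 1) := by
  intro c hc hrel
  obtain ⟨D, hD, c', hc'⟩ := Rat.exists_pos_nat_mul_eq_natCast c hc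
  have hcoord (i : σ) :
      (∑ k, c' (.inl k) • a k) i + c' (.inr i) = (∑ k, c' (.inl k) • b k) i := by
    have h := congrArg (fun x => (D : ℚ) * x i) hrel
    simp only [Fintype.sum_sum_type, Finset.sum_apply, Pi.smul_apply, Sum.elim_inl,
      Sum.elim_inr, Pi.single_apply, smul_eq_mul, mul_ite, mul_one, mul_zero, Finset.sum_ite_eq,
      Finset.mem_univ, if_true, Pi.zero_apply, mul_add, Finset.mul_sum, ← mul_assoc, ← hc',
      mul_sub, Finset.sum_sub_distrib] at h
    simp only [Finsupp.coe_finsetSum, Finset.sum_apply, Finsupp.smul_apply, smul_eq_mul]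
    exact_mod_cast (by linarith : (∑ k, (c' (.inl k) : ℚ) * a k i) + c' (.inr i) =
      ∑ k, (c' (.inl k) : ℚ) * b k i)
  have hinl : (fun k => c' (.inl k)) = 0 := by
    by_contra h
    refine (m.toSyn_sum_nsmul_lt hab h).not_ge (m.toSyn_monotone fun i => ?_)
    rw [← hcoord i]
    exact Nat.le_add_right _ _
  have hc'0 : c' = 0 := by
    funext j
    rcases j with k | i
    · exact congrFun hinl k
    · simpa [show ∀ k, c' (.inl k) = 0 from congrFun hinl] using hcoord i
  funext j
  simpa [hc'0, hD.ne'] using (hc' j).symm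

theorem exists_weight_lt_weight [Fintype σ] {κ : Type*} [Fintype κ] {a b : κ → σ →₀ ℕ}
    (hab : ∀ k, m.toSyn (b k) < m.toSyn (a k)) :
    ∃ w : σ → ℕ, ∀ k, weight w (b k) < weight w (a k) := by
  classical
  obtain ⟨ω, hω⟩ := exists_forall_dotProduct_pos _ (m.noNonnegRelation_of_toSyn_lt hab)
  have hω_pos (i : σ) : 0 < ω i := by simpa [dotProduct_single] using hω (.inr i)
  obtain ⟨D, hD, w, hw⟩ := Rat.exists_pos_nat_mul_eq_natCast ω fun i => (hω_pos i).le
  refine ⟨w, fun k => ?_⟩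
  have hdiff : (weight w (a k) : ℚ) - weight w (b k) =
      D * (ω ⬝ᵥ fun i => (a k i : ℚ) - b k i) := by
    simp only [weight_eq_sum, smul_eq_mul, Nat.cast_sum, Nat.cast_mul, hw, dotProduct,
      Finset.mul_sum, ← Finset.sum_sub_distrib]
    exact Finset.sum_congr rfl fun i _ => by ring
  exact_mod_cast sub_pos.1 (hdiff ▸ mul_pos (Nat.cast_pos.2 hD) (hω (.inl k)))

end MonomialOrder

namespace MvPolynomial

variable {σ R : Type*} [CommSemiring R] (w : σ → ℕ)

noncomputable def weightedInitialForm (p : MvPolynomial σ R) : MvPolynomial σ R :=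
  weightedHomogeneousComponent w (weightedTotalDegree w p) p

@[simp]
theorem weightedInitialForm_zero : weightedInitialForm w (0 : MvPolynomial σ R) = 0 :=
  map_zero _

variable {w}

theorem weightedHomogeneousComponent_eq_zero_or_eq_weightedInitialForm {p : MvPolynomial σ R}
    {d : ℕ} (h : weightedTotalDegree w p ≤ d) :
    weightedHomogeneousComponent w d p = 0 ∨
      weightedHomogeneousComponent w d p = weightedInitialForm w p := by
  rcases h.lt_or_eq with h | rfl
  · exact .inl (weightedHomogeneousComponent_eq_zero _ _ h)
  · exact .inr rfl

theorem weightedHomogeneousComponent_monomial_mul (γ : σ →₀ ℕ) (c : R) (p : MvPolynomial σ R)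
    (d : ℕ) :
    weightedHomogeneousComponent w (weight w γ + d) (monomial γ c * p) =
      monomial γ c * weightedHomogeneousComponent w d p := by
  classical
  ext δ
  simp only [coeff_weightedHomogeneousComponent, coeff_monomial_mul']
  by_cases h : γ ≤ δ
  · obtain ⟨ε, rfl⟩ := le_iff_exists_add.1 h
    simp [map_add]
  · simp [h]

theorem weightedTotalDegree_monomial_mul_le (γ : σ →₀ ℕ) (c : R) (p : MvPolynomial σ R) :
    weightedTotalDegree w (monomial γ c * p) ≤ weight w γ + weightedTotalDegree w p := by
  classical
  refine Finset.sup_le fun δ hδ => ?_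
  obtain ⟨γ', hγ', ε, hε, rfl⟩ := Finset.mem_add.1 (support_mul _ _ hδ)
  rw [Finset.mem_singleton.1 (support_monomial_subset hγ'), map_add]
  exact Nat.add_le_add_left (le_weightedTotalDegree w hε) _

theorem weightedTotalDegree_sub_le {R : Type*} [CommRing R] (p q : MvPolynomial σ R) :
    weightedTotalDegree w (p - q) ≤ max (weightedTotalDegree w p) (weightedTotalDegree w q) := by
  classical
  refine Finset.sup_le fun δ hδ => ?_
  rcases Finset.mem_union.1 (support_sub σ p q hδ) with h | h
  · exact le_max_of_le_left (le_weightedTotalDegree w h)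
  · exact le_max_of_le_right (le_weightedTotalDegree w h)

end MvPolynomial

namespace MonomialOrder

open MvPolynomial Ideal

variable {σ : Type*} {m : MonomialOrder σ} {w : σ → ℕ}

section CommSemiring

variable {R : Type*} [CommSemiring R]

theorem weightedInitialForm_eq_leadingTerm {p : MvPolynomial σ R}
    (h : ∀ β ∈ p.support, β ≠ m.degree p → weight w β < weight w (m.degree p)) :
    weightedInitialForm w p = m.leadingTerm p := by
  classical
  rcases eq_or_ne p 0 with rfl | hp
  · simp
  have hW : weightedTotalDegree w p = weight w (m.degree p) := by
    refine le_antisymm (Finset.sup_le fun β hβ => ?_)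
      (le_weightedTotalDegree w (m.degree_mem_support hp))
    rcases eq_or_ne β (m.degree p) with rfl | hne
    exacts [le_rfl, (h β hβ hne).le]
  ext δ
  rw [weightedInitialForm, coeff_weightedHomogeneousComponent, hW, leadingTerm, coeff_monomial]
  rcases eq_or_ne δ (m.degree p) with rfl | hne
  · simp [leadingCoeff]
  rw [if_neg hne.symm, ite_eq_right_iff]
  intro hwt
  by_contra hδ
  exact (h δ (MvPolynomial.mem_support_iff.2 hδ) hne).ne hwt

theorem weightedTotalDegree_eq_weight_degree {p : MvPolynomial σ R} (hp : p ≠ 0)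
    (h : weightedInitialForm w p = m.leadingTerm p) :
    weightedTotalDegree w p = weight w (m.degree p) := by
  classical
  have hcoeff := congrArg (coeff (m.degree p)) h
  rw [weightedInitialForm, coeff_weightedHomogeneousComponent, leadingTerm, coeff_monomial,
    if_pos rfl] at hcoeff
  by_contra hne
  rw [if_neg (Ne.symm hne)] at hcoeff
  exact m.leadingCoeff_ne_zero_iff.2 hp hcoeff.symm

variable (m) in
theorem exists_weightedInitialForm_eq_leadingTerm [Fintype σ] (G : Finset (MvPolynomial σ R)) :
    ∃ w : σ → ℕ, ∀ g ∈ G, weightedInitialForm w g = m.leadingTerm g := by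
  obtain ⟨w, hw⟩ := m.exists_weight_lt_weight
    (κ := (g : G) × (g.1.support.erase (m.degree g.1)))
    (a := fun x => m.degree x.1.1) (b := fun x => x.2.1) fun ⟨g, β, hβ⟩ => by
      obtain ⟨hne, hβ⟩ := Finset.mem_erase.1 hβ
      exact (m.le_degree hβ).lt_of_ne (m.toSyn.injective.ne hne)
  exact ⟨w, fun g hg => weightedInitialForm_eq_leadingTerm fun β hβ hne =>
    hw ⟨⟨g, hg⟩, β, Finset.mem_erase.2 ⟨hne, hβ⟩⟩⟩

end CommSemiring

variable {K : Type*} [Field K]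

theorem exists_degree_le_of_leadingTerm_mem_span {G : Set (MvPolynomial σ K)}
    {f : MvPolynomial σ K} (hf : f ≠ 0) (h : m.leadingTerm f ∈ span (m.leadingTerm '' G)) :
    ∃ g ∈ G, g ≠ 0 ∧ m.degree g ≤ m.degree f := by
  classical
  rw [span_leadingTerm_eq_span_monomial', ← Set.image_image (fun s => monomial s (1 : K)),
    mem_ideal_span_monomial_image] at h
  obtain ⟨_, ⟨g, ⟨hg, hg0⟩, rfl⟩, hle⟩ := h (m.degree f) (by simp [support_leadingTerm, hf])
  exact ⟨g, hg, hg0, hle⟩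

theorem exists_weightedInitialForm_eq_add_reduce {f g : MvPolynomial σ K} (hf : f ≠ 0)
    (hg : IsUnit (m.leadingCoeff g)) (hle : m.degree g ≤ m.degree f)
    (hgw : weightedInitialForm w g = m.leadingTerm g) :
    ∃ a ∈ ({0, weightedInitialForm w (m.reduce hg f)} : Set (MvPolynomial σ K)),
      ∃ b ∈ ({0, m.leadingTerm f} : Set (MvPolynomial σ K)), weightedInitialForm w f = a + b := by
  set γ := m.degree f - m.degree g
  set c := hg.unit⁻¹ * m.leadingCoeff f
  set W := weightedTotalDegree w f
  have hdeg : m.degree f = γ + m.degree g := (tsub_add_cancel_of_le hle).symm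
  have hWg : weightedTotalDegree w g = weight w (m.degree g) :=
    weightedTotalDegree_eq_weight_degree (fun h => by simp [h] at hg) hgw
  have hγW : weight w γ + weight w (m.degree g) ≤ W := by
    rw [← map_add, ← hdeg]
    exact le_weightedTotalDegree w (m.degree_mem_support hf)
  have hlead : monomial γ c * m.leadingTerm g = m.leadingTerm f := by
    rw [leadingTerm, leadingTerm, monomial_mul, ← hdeg, mul_right_comm, hg.val_inv_mul, one_mul]
  have hq : weightedHomogeneousComponent w W (monomial γ c * g) = 0 ∨
      weightedHomogeneousComponent w W (monomial γ c * g) = m.leadingTerm f := by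
    rw [show W = weight w γ + (W - weight w γ) by omega, weightedHomogeneousComponent_monomial_mul,
      ← hlead, ← hgw]
    rcases weightedHomogeneousComponent_eq_zero_or_eq_weightedInitialForm
      (show weightedTotalDegree w g ≤ W - weight w γ by omega) with h | h <;> simp [h]
  have hWr : weightedTotalDegree w (m.reduce hg f) ≤ W :=
    (weightedTotalDegree_sub_le f (monomial γ c * g)).trans <| max_le le_rfl <|
      (weightedTotalDegree_monomial_mul_le γ c g).trans (by omega)
  refine ⟨_, weightedHomogeneousComponent_eq_zero_or_eq_weightedInitialForm hWr, _, hq, ?_⟩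
  rw [← map_add, reduce, sub_add_cancel]
  rfl

variable (m w) in
theorem weightedInitialForm_mem_span_leadingTerm {I : Ideal (MvPolynomial σ K)}
    {G : Set (MvPolynomial σ K)} (hGI : G ⊆ I)
    (hGB : span (m.leadingTerm '' (I : Set (MvPolynomial σ K))) = span (m.leadingTerm '' G))
    (hG : ∀ g ∈ G, weightedInitialForm w g = m.leadingTerm g) {f : MvPolynomial σ K}
    (hf : f ∈ I) : weightedInitialForm w f ∈ span (m.leadingTerm '' G) := by
  induction hs : m.toSyn (m.degree f) using WellFoundedLT.induction generalizing f with
  | _ s ih =>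
    have hLT : m.leadingTerm f ∈ span (m.leadingTerm '' G) := hGB ▸ subset_span ⟨f, hf, rfl⟩
    rcases eq_or_ne f 0 with rfl | hf0
    · simp
    obtain ⟨g, hgG, hg0, hle⟩ := exists_degree_le_of_leadingTerm_mem_span hf0 hLT
    rcases eq_or_ne (m.degree f) 0 with hdeg | hdeg
    · have hunit : IsUnit (m.leadingTerm f) := by
        rw [leadingTerm, hdeg, ← C_apply]
        exact (m.leadingCoeff_ne_zero_iff.2 hf0).isUnit.map C
      rw [eq_top_of_isUnit_mem _ hLT hunit]
      trivial
    have hg : IsUnit (m.leadingCoeff g) := (m.leadingCoeff_ne_zero_iff.2 hg0).isUnit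
    have hr : m.reduce hg f ∈ I := I.sub_mem hf (I.mul_mem_left _ (hGI hgG))
    obtain ⟨a, ha, b, hb, heq⟩ := exists_weightedInitialForm_eq_add_reduce hf0 hg hle (hG g hgG)
    rw [heq]
    refine add_mem ?_ ?_
    · rcases ha with rfl | rfl
      · exact zero_mem _
      · exact ih _ (hs ▸ m.degree_reduce_lt hg hle hdeg) hr rfl
    · rcases hb with rfl | rfl
      · exact zero_mem _
      · exact hLT

variable (m w) in
theorem span_weightedInitialForm_eq_span_leadingTerm {I : Ideal (MvPolynomial σ K)}
    {G : Set (MvPolynomial σ K)} (hGI : G ⊆ I)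
    (hGB : span (m.leadingTerm '' (I : Set (MvPolynomial σ K))) = span (m.leadingTerm '' G))
    (hG : ∀ g ∈ G, weightedInitialForm w g = m.leadingTerm g) :
    span (weightedInitialForm w '' (I : Set (MvPolynomial σ K))) =
      span (m.leadingTerm '' (I : Set (MvPolynomial σ K))) := by
  refine le_antisymm (span_le.2 ?_) ?_
  · rintro _ ⟨f, hf, rfl⟩
    rw [SetLike.mem_coe, hGB]
    exact weightedInitialForm_mem_span_leadingTerm m w hGI hGB hG hf
  · rw [hGB]
    exact span_mono fun _ ⟨g, hg, hgf⟩ => ⟨g, hGI hg, hgf ▸ hG g hg⟩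

end MonomialOrder

theorem wt_eq_weight (ω : Fin (n + 1) → ℕ) : wt ω = weight ω :=
  funext fun α => by simp [wt, weight_eq_sum, mul_comm]

theorem inForm_eq_weightedInitialForm (ω : Fin (n + 1) → ℕ) (f : MvPolynomial (Fin (n + 1)) k) :
    inForm ω f = weightedInitialForm ω f := by
  rw [inForm, wt_eq_weight, weightedInitialForm, weightedHomogeneousComponent_apply]
  rfl

theorem isLeadingExp_iff {mo : MonomialOrder (Fin (n + 1))} {f : MvPolynomial (Fin (n + 1)) k}
    {α : Fin (n + 1) →₀ ℕ} : IsLeadingExp mo f α ↔ f ≠ 0 ∧ α = mo.degree f := by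
  constructor
  · rintro ⟨hα, hmax⟩
    have hf : f ≠ 0 := fun h => hα (by simp [h])
    exact ⟨hf, mo.toSyn.injective <| le_antisymm (mo.le_degree (MvPolynomial.mem_support_iff.2 hα))
      (hmax _ (mo.coeff_degree_ne_zero_iff.2 hf))⟩
  · rintro ⟨hf, rfl⟩
    exact ⟨mo.coeff_degree_ne_zero_iff.2 hf,
      fun β hβ => mo.le_degree (MvPolynomial.mem_support_iff.2 hβ)⟩

theorem exists_isLeadingExp_and_eq_iff {mo : MonomialOrder (Fin (n + 1))}
    {f p : MvPolynomial (Fin (n + 1)) k} :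
    (∃ α, IsLeadingExp mo f α ∧ p = monomial α (coeff α f)) ↔ f ≠ 0 ∧ p = mo.leadingTerm f := by
  constructor
  · rintro ⟨α, hα, rfl⟩
    obtain ⟨hf, rfl⟩ := isLeadingExp_iff.1 hα
    exact ⟨hf, rfl⟩
  · rintro ⟨hf, rfl⟩
    exact ⟨_, isLeadingExp_iff.2 ⟨hf, rfl⟩, rfl⟩

theorem span_setOf_isLeadingExp (mo : MonomialOrder (Fin (n + 1)))
    (B : Set (MvPolynomial (Fin (n + 1)) k)) :
    Ideal.span {p | ∃ f ∈ B, ∃ α, IsLeadingExp mo f α ∧ p = monomial α (coeff α f)} =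
      Ideal.span (mo.leadingTerm '' B) := by
  rw [← mo.span_leadingTerm_sdiff_singleton_zero]
  congr 1
  ext p
  simp only [exists_isLeadingExp_and_eq_iff, Set.mem_ofPred_eq, Set.mem_image, Set.mem_sdiff,
    Set.mem_singleton_iff]
  grind

theorem initialIdeal_eq_span (mo : MonomialOrder (Fin (n + 1)))
    (I : Ideal (MvPolynomial (Fin (n + 1)) k)) :
    initialIdeal mo I = Ideal.span (mo.leadingTerm '' I) :=
  span_setOf_isLeadingExp mo (I : Set (MvPolynomial (Fin (n + 1)) k))

theorem inFormIdeal_eq_span (ω : Fin (n + 1) → ℕ) (I : Ideal (MvPolynomial (Fin (n + 1)) k)) :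
    inFormIdeal ω I = Ideal.span (weightedInitialForm ω '' I) := by
  rw [inFormIdeal]
  congr 1
  ext p
  simp [inForm_eq_weightedInitialForm, eq_comm]

theorem stmt18_general (mo : MonomialOrder (Fin (n + 1)))
    (I : Ideal (MvPolynomial (Fin (n + 1)) k))
    (G : Finset (MvPolynomial (Fin (n + 1)) k))
    (hGI : ∀ g ∈ G, g ∈ I) (hG0 : ∀ g ∈ G, g ≠ 0)
    (hGB : initialIdeal mo I =
      Ideal.span {p | ∃ g ∈ G, ∃ α, IsLeadingExp mo g α ∧ p = monomial α (coeff α g)}) :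
    (∃ ω : Fin (n + 1) → ℕ, ∀ g ∈ G, ∃ α, IsLeadingExp mo g α ∧
      inForm ω g = monomial α (coeff α g)) ∧
    ∀ ω : Fin (n + 1) → ℕ, (∀ g ∈ G, ∃ α, IsLeadingExp mo g α ∧
        inForm ω g = monomial α (coeff α g)) →
      inFormIdeal ω I = initialIdeal mo I := by
  have hGB' : Ideal.span (mo.leadingTerm '' I) =
      Ideal.span (mo.leadingTerm '' (G : Set (MvPolynomial (Fin (n + 1)) k))) := by
    rw [← initialIdeal_eq_span, hGB, ← span_setOf_isLeadingExp]
    simp only [Finset.mem_coe]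
  refine ⟨?_, fun ω hω => ?_⟩
  · obtain ⟨ω, hω⟩ := mo.exists_weightedInitialForm_eq_leadingTerm G
    exact ⟨ω, fun g hg => exists_isLeadingExp_and_eq_iff.2
      ⟨hG0 g hg, by rw [inForm_eq_weightedInitialForm, hω g hg]⟩⟩
  · have hG (g) (hg : g ∈ (G : Set (MvPolynomial (Fin (n + 1)) k))) :
        weightedInitialForm ω g = mo.leadingTerm g := by
      simpa [inForm_eq_weightedInitialForm] using (exists_isLeadingExp_and_eq_iff.1 (hω g hg)).2
    rw [inFormIdeal_eq_span, initialIdeal_eq_span]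
    exact mo.span_weightedInitialForm_eq_span_leadingTerm ω hGI hGB' hG

/-- Sturmfels, Proposition 1.11: for a homogeneous ideal `I` with a finite Gröbner basis
`G` with respect to a monomial order `≺`, there exists a nonnegative integral weight
vector `ω` such that `in_ω(g) = in_≺(g)` for every `g ∈ G`; and for any such `ω`,
`in_ω(I) = in_≺(I)` (i.e. the flat limit under the 1-PS `λ(t).x_i = t^{-ω_i} x_i`
of `λ(t).I` as `t → 0` is the initial ideal `in_≺(I)`). -/
theorem stmt18 (mo : MonomialOrder (Fin (n + 1)))
    (I : Ideal (MvPolynomial (Fin (n + 1)) k))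
    (hI : I.IsHomogeneous (homogeneousSubmodule (Fin (n + 1)) k))
    (G : Finset (MvPolynomial (Fin (n + 1)) k))
    (hGI : ∀ g ∈ G, g ∈ I) (hG0 : ∀ g ∈ G, g ≠ 0)
    (hGB : initialIdeal mo I =
      Ideal.span {p | ∃ g ∈ G, ∃ α, IsLeadingExp mo g α ∧ p = monomial α (coeff α g)}) :
    (∃ ω : Fin (n + 1) → ℕ, ∀ g ∈ G, ∃ α, IsLeadingExp mo g α ∧
      inForm ω g = monomial α (coeff α g)) ∧
    ∀ ω : Fin (n + 1) → ℕ, (∀ g ∈ G, ∃ α, IsLeadingExp mo g α ∧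
        inForm ω g = monomial α (coeff α g)) →
      inFormIdeal ω I = initialIdeal mo I :=
  stmt18_general mo I G hGI hG0 hGB
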